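/- Trilinear specialization: as formal power series in y and z, sum_{m,n>=0} C_m(a,r) * C_n(b,s) * C_{m+n}(c,t) * y^m z^n / (m! n!) = e^((r*y+s*z)*t) * sum_{m,n>=0} (a)_m (b)_n (c)_{m+n} * y^m z^n / (m! n! * (1-t*y)^(m+a) * (1-t*z)^(n+b) * (1-r*y-s*z)^(m+n+c)). -/

import Mathlib

/-!
An umbral argument. Let `L` be the `R`-linear functional on `R[X₀, X₁, X₂]` sending
`X₀^α X₁^β X₂^γ` to `(a)_α (b)_β (c)_γ`. By the binomial theorem `C_n(a, r) = L((X₀ + r)^n)`, and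
since the three factors involve separate variables,
`C_M(a, r) C_N(b, s) C_(M+N)(c, t) = L((X₀ + r)^M (X₁ + s)^N (X₂ + t)^(M+N))`.
After dividing by `M! N!` the polynomial is `((X₀ + r)(X₂ + t))^M / M! · ((X₁ + s)(X₂ + t))^N / N!`.
Expanding `(X₀ + r)(X₂ + t) = X₀X₂ + rt + tX₀ + rX₂` with the exponential form
`(u + v)^n / n! = ∑ u^k / k! · v^(n-k) / (n-k)!` of the binomial theorem gives the six-fold sum,
the shifted Pochhammer symbols coming from `(a)_(m+i) = (a)_m (a+m)_i`.
-/

open Finset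

noncomputable def rf {R : Type*} [CommRing R] (a : R) (k : ℕ) : R :=
  (ascPochhammer R k).eval a

noncomputable def Ch {R : Type*} [CommRing R] (a r : R) (n : ℕ) : R :=
  ∑ k ∈ Finset.range (n + 1), (n.choose k : R) * rf a k * r ^ (n - k)

open MvPolynomial

open scoped Nat

theorem rf_add {R : Type*} [CommRing R] (a : R) (m k : ℕ) :
    rf a (m + k) = rf a m * rf (a + m) k := by
  simp [rf, ← ascPochhammer_mul, Polynomial.eval_comp]

section ExpBinomial

variable {A : Type*} [CommSemiring A] [Algebra ℚ A]

theorem inv_factorial_smul_add_pow (x y : A) (n : ℕ) :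
    (n ! : ℚ)⁻¹ • (x + y) ^ n =
      ∑ k ∈ range (n + 1), ((k ! : ℚ)⁻¹ • x ^ k) * (((n - k)! : ℚ)⁻¹ • y ^ (n - k)) := by
  rw [add_pow, smul_sum]
  refine sum_congr rfl fun k hk => ?_
  have hkn : k ≤ n := Nat.lt_succ_iff.mp (mem_range.mp hk)
  rw [smul_mul_smul_comm, mul_comm, ← nsmul_eq_mul, ← Nat.cast_smul_eq_nsmul ℚ, smul_smul,
    Nat.cast_choose ℚ hkn]
  congr 1
  field_simp

theorem inv_factorial_smul_add_add_add_pow (u₁ u₂ u₃ u₄ : A) (n : ℕ) :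
    (n ! : ℚ)⁻¹ • (u₁ + (u₂ + (u₃ + u₄))) ^ n =
      ∑ m ∈ range (n + 1), ∑ p ∈ range (n - m + 1), ∑ i ∈ range (n - m - p + 1),
        ((m ! : ℚ)⁻¹ • u₁ ^ m) * (((p ! : ℚ)⁻¹ • u₂ ^ p) *
          (((i ! : ℚ)⁻¹ • u₃ ^ i) * (((n - m - p - i)! : ℚ)⁻¹ • u₄ ^ (n - m - p - i)))) := by
  simp only [inv_factorial_smul_add_pow, mul_sum]

end ExpBinomial

section PochhammerEval

variable {R : Type*} [CommRing R]

noncomputable def pochhammerEval (a b c : R) : MvPolynomial (Fin 3) R →ₗ[R] R :=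
  (basisMonomials (Fin 3) R).constr R fun d => rf a (d 0) * rf b (d 1) * rf c (d 2)

theorem pochhammerEval_C_mul_X_pow (a b c x : R) (α β γ : ℕ) :
    pochhammerEval a b c (C x * (X 0 ^ α * X 1 ^ β * X 2 ^ γ)) =
      x * (rf a α * rf b β * rf c γ) := by
  have hmono : C x * (X 0 ^ α * X 1 ^ β * X 2 ^ γ) =
      x • basisMonomials (Fin 3) R
        (Finsupp.single 0 α + Finsupp.single 1 β + Finsupp.single 2 γ) := by
    simp [X_pow_eq_monomial, monomial_mul, smul_monomial, C_mul_monomial]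
  rw [hmono, map_smul, pochhammerEval, Module.Basis.constr_basis, smul_eq_mul]
  simp

theorem pochhammerEval_X_add_C_pow (a b c r s t : R) (M N K : ℕ) :
    pochhammerEval a b c ((X 0 + C r) ^ M * (X 1 + C s) ^ N * (X 2 + C t) ^ K) =
      Ch a r M * Ch b s N * Ch c t K := by
  simp only [add_pow, Ch, sum_mul, mul_sum, map_sum]
  refine sum_congr rfl fun γ _ => sum_congr rfl fun β _ => sum_congr rfl fun α _ => ?_
  rw [show X 0 ^ α * C r ^ (M - α) * (M.choose α : MvPolynomial (Fin 3) R) *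
      (X 1 ^ β * C s ^ (N - β) * (N.choose β : MvPolynomial (Fin 3) R)) *
      (X 2 ^ γ * C t ^ (K - γ) * (K.choose γ : MvPolynomial (Fin 3) R)) =
      C ((M.choose α : R) * r ^ (M - α) * ((N.choose β : R) * s ^ (N - β)) *
        ((K.choose γ : R) * t ^ (K - γ))) * (X 0 ^ α * X 1 ^ β * X 2 ^ γ) by
    simp only [map_mul, map_pow, map_natCast]; ring, pochhammerEval_C_mul_X_pow]
  ring

end PochhammerEval

section Trilinear

variable {R : Type*} [CommRing R] [Algebra ℚ R]

theorem pochhammerEval_expansion_term (a b c r s t : R) (m n p q i j k l : ℕ) :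
    pochhammerEval a b c
      ((((m ! : ℚ)⁻¹ • (X 0 * X 2) ^ m) * (((p ! : ℚ)⁻¹ • C (r * t) ^ p) *
          (((i ! : ℚ)⁻¹ • (C t * X 0) ^ i) * ((k ! : ℚ)⁻¹ • (C r * X 2) ^ k)))) *
        (((n ! : ℚ)⁻¹ • (X 1 * X 2) ^ n) * (((q ! : ℚ)⁻¹ • C (s * t) ^ q) *
          (((j ! : ℚ)⁻¹ • (C t * X 1) ^ j) * ((l ! : ℚ)⁻¹ • (C s * X 2) ^ l))))) =
      (((m ! * n ! : ℕ) : ℚ)⁻¹ • (rf a m * rf b n * rf c (m + n))) *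
        ((p ! : ℚ)⁻¹ • (r * t) ^ p) * ((q ! : ℚ)⁻¹ • (s * t) ^ q) *
        ((i ! : ℚ)⁻¹ • (rf (a + (m : R)) i * t ^ i)) *
        ((j ! : ℚ)⁻¹ • (rf (b + (n : R)) j * t ^ j)) *
        (((k ! * l ! : ℕ) : ℚ)⁻¹ •
          (rf (c + (m : R) + (n : R)) (k + l) * r ^ k * s ^ l)) := by
  set κ := algebraMap ℚ R
  have hmono : pochhammerEval a b c
      (C (κ (m !)⁻¹ * κ (p !)⁻¹ * κ (i !)⁻¹ * κ (k !)⁻¹ * κ (n !)⁻¹ * κ (q !)⁻¹ * κ (j !)⁻¹ *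
          κ (l !)⁻¹ * ((r * t) ^ p * t ^ i * r ^ k * (s * t) ^ q * t ^ j * s ^ l)) *
        (X 0 ^ (m + i) * X 1 ^ (n + j) * X 2 ^ ((m + n) + (k + l)))) = _ :=
    pochhammerEval_C_mul_X_pow ..
  refine (congrArg (pochhammerEval a b c) ?_).trans (hmono.trans ?_)
  · simp only [Algebra.smul_def, MvPolynomial.algebraMap_apply, map_mul, map_pow]
    ring
  · rw [rf_add a m i, rf_add b n j, rf_add c (m + n) (k + l)]
    simp only [Algebra.smul_def, Nat.cast_mul, mul_inv, map_mul, Nat.cast_add, add_assoc]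
    ring

theorem inv_factorial_smul_X_add_C_pow_mul (r s t : R) (M N : ℕ) :
    ((M ! * N ! : ℕ) : ℚ)⁻¹ •
        ((X 0 + C r) ^ M * (X 1 + C s) ^ N * (X 2 + C t) ^ (M + N) : MvPolynomial (Fin 3) R) =
      ((M ! : ℚ)⁻¹ • (X 0 * X 2 + (C (r * t) + (C t * X 0 + C r * X 2))) ^ M) *
        ((N ! : ℚ)⁻¹ • (X 1 * X 2 + (C (s * t) + (C t * X 1 + C s * X 2))) ^ N) := by
  have hM : X 0 * X 2 + (C (r * t) + (C t * X 0 + C r * X 2)) =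
      ((X 0 + C r) * (X 2 + C t) : MvPolynomial (Fin 3) R) := by
    rw [map_mul]; ring
  have hN : X 1 * X 2 + (C (s * t) + (C t * X 1 + C s * X 2)) =
      ((X 1 + C s) * (X 2 + C t) : MvPolynomial (Fin 3) R) := by
    rw [map_mul]; ring
  rw [hM, hN, smul_mul_smul_comm, Nat.cast_mul, mul_inv, mul_pow, mul_pow, pow_add]
  congr 1
  ring

end Trilinear

/-- Trilinear specialization, stated coefficient by coefficient in the two
formal variables `y`, `z`: for all `M`, `N`, the coefficient of `y^M z^N` of
`∑_{m,n} C_m(a,r) C_n(b,s) C_{m+n}(c,t) y^m z^n/(m! n!)`, namely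
`C_M(a,r) C_N(b,s) C_{M+N}(c,t)/(M! N!)`, equals the coefficient of `y^M z^N` of
`e^{(ry+sz)t} ∑_{m,n} (a)_m (b)_n (c)_{m+n} y^m z^n /(m! n! (1-ty)^{m+a} (1-tz)^{n+b} (1-ry-sz)^{m+n+c})`,
expanded via `e^{w} = ∑ w^p/p!` and `(1-w)^{-u} = ∑ (u)_d w^d/d!`. -/
theorem stmt11 {R : Type*} [CommRing R] [Algebra ℚ R] (a b c r s t : R) :
    ∀ M N : ℕ,
      ((M.factorial * N.factorial : ℕ) : ℚ)⁻¹ •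
          (Ch a r M * Ch b s N * Ch c t (M + N)) =
        ∑ m ∈ Finset.range (M + 1), ∑ n ∈ Finset.range (N + 1),
          ∑ p ∈ Finset.range (M - m + 1), ∑ q ∈ Finset.range (N - n + 1),
            ∑ i ∈ Finset.range (M - m - p + 1),
              ∑ j ∈ Finset.range (N - n - q + 1),
                (((m.factorial * n.factorial : ℕ) : ℚ)⁻¹ •
                    (rf a m * rf b n * rf c (m + n))) *
                  ((p.factorial : ℚ)⁻¹ • (r * t) ^ p) *
                  ((q.factorial : ℚ)⁻¹ • (s * t) ^ q) *
                  ((i.factorial : ℚ)⁻¹ • (rf (a + (m : R)) i * t ^ i)) *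
                  ((j.factorial : ℚ)⁻¹ • (rf (b + (n : R)) j * t ^ j)) *
                  ((((M - m - p - i).factorial * (N - n - q - j).factorial : ℕ) : ℚ)⁻¹ •
                    (rf (c + (m : R) + (n : R)) ((M - m - p - i) + (N - n - q - j)) *
                      r ^ (M - m - p - i) * s ^ (N - n - q - j))) := by
  intro M N
  rw [← pochhammerEval_X_add_C_pow, ← LinearMap.map_smul_of_tower,
    inv_factorial_smul_X_add_C_pow_mul, inv_factorial_smul_add_add_add_pow,
    inv_factorial_smul_add_add_add_pow]
  simp only [sum_mul_sum, map_sum, pochhammerEval_expansion_term]
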